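/- Let K be a normal subgroup of a finite group G such that [x, K] is a normal subset of K for every small element x of G. Then [M(G), K] ≤ Z(G), i.e., every commutator of an element of M(G) with an element of K lies in the center of G. -/

import Mathlib

/-- The size of the conjugacy class of `x` in `G`. -/
noncomputable def classCard {G : Type*} [Group G] (x : G) : ℕ := Nat.card (conjugatesOf x)

/-- An element `x` is *small* if its conjugacy class size is among the two smallest
conjugacy class sizes of `G`, i.e. at most one conjugacy class size is strictly
smaller than that of `x`. -/
def IsSmall {G : Type*} [Group G] (x : G) : Prop :=
  {n : ℕ | (∃ g : G, classCard g = n) ∧ n < classCard x}.Subsingleton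

/-- `M G` is the subgroup generated by all small elements of `G`. -/
def smallGen (G : Type*) [Group G] : Subgroup G := Subgroup.closure {x : G | IsSmall x}

/-- `[x, K] = {x⁻¹k⁻¹xk : k ∈ K}`. -/
def commSet {G : Type*} [Group G] (x : G) (K : Set G) : Set G :=
  {y | ∃ k ∈ K, y = x⁻¹ * k⁻¹ * x * k}

/-- `[A, x] = {a⁻¹x⁻¹ax : a ∈ A}`. -/
def commSet' {G : Type*} [Group G] (A : Set G) (x : G) : Set G :=
  {y | ∃ a ∈ A, y = a⁻¹ * x⁻¹ * a * x}

/-- `S` is a normal subset of `K`: `k⁻¹Sk = S` for all `k ∈ K`. -/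
def IsNormalSubsetOf {G : Type*} [Group G] (S K : Set G) : Prop :=
  ∀ k ∈ K, (fun s => k⁻¹ * s * k) '' S = S

/-- The Fitting subgroup: the join of all nilpotent normal subgroups (for a finite
group, its largest nilpotent normal subgroup). -/
def fittingSubgroup (G : Type*) [Group G] : Subgroup G :=
  ⨆ H ∈ {H : Subgroup G | H.Normal ∧ Group.IsNilpotent ↥H}, H

/-!
Let `x` be small and `1 ≠ s ∈ S := [x, K]`. Both `C_G(x)` and `K` act on `S` by conjugation, hence
so does `T := C_G(x) K`; since this action fixes `1 ∈ S`, the `T`-class of `s` is strictly smaller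
than `|S| = |K : C_K(x)| ≤ |T : C_G(x)|`. Multiplying by `|G : T|` gives `|s^G| < |x^G|`, and as `x`
is small, `s` has the smallest class size `1`, i.e. `s` is central. The elements `g` with
`[g, K] ⊆ Z(G)` form a subgroup (the preimage of a centralizer in `G / Z(G)`), so the property
passes from the small elements to `M(G)`.
-/

open scoped commutatorElement

namespace Subgroup

variable {G : Type*} [Group G]

theorem index_eq_card_range_of_fibers (H : Subgroup G) {α : Type*} (f : G → α)
    (hf : ∀ a b, f a = f b ↔ a⁻¹ * b ∈ H) : H.index = Nat.card (Set.range f) :=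
  Nat.card_congr <| (Quotient.congrRight fun a b => by
    rw [QuotientGroup.leftRel_apply, Setoid.ker_def, hf]).trans (Setoid.quotientKerEquivRange f)

theorem conj_eq_conj_iff_mem_centralizer {y a b : G} :
    a * y * a⁻¹ = b * y * b⁻¹ ↔ a⁻¹ * b ∈ centralizer {y} := by
  rw [mem_centralizer_singleton_iff]
  constructor <;> intro h
  · calc a⁻¹ * b * y = a⁻¹ * (b * y * b⁻¹) * b := by group
      _ = y * (a⁻¹ * b) := by rw [← h]; group
  · calc a * y * a⁻¹ = a * (y * (a⁻¹ * b)) * b⁻¹ := by group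
      _ = b * y * b⁻¹ := by rw [← h]; group

theorem relIndex_centralizer_eq_card_range_conj (H : Subgroup G) (y : G) :
    (centralizer {y}).relIndex H = Nat.card (Set.range fun h : H => (h : G) * y * (h : G)⁻¹) :=
  index_eq_card_range_of_fibers _ _ fun a b => by
    rw [conj_eq_conj_iff_mem_centralizer, mem_subgroupOf, coe_mul, coe_inv]

theorem index_le_relIndex_mul_index (H K : Subgroup G) [(H ⊓ K).FiniteIndex] :
    H.index ≤ H.relIndex K * K.index := by
  rw [← inf_relIndex_right, relIndex_mul_index inf_le_right]
  exact index_antitone inf_le_left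

theorem commutator_closure_le {N : Subgroup G} [N.Normal] {S : Set G} {K : Subgroup G}
    (h : ∀ s ∈ S, ∀ k ∈ K, ⁅s, k⁆ ∈ N) : ⁅closure S, K⁆ ≤ N := by
  rw [← QuotientGroup.ker_mk' N, ← map_eq_bot_iff, map_commutator, MonoidHom.map_closure,
    commutator_eq_bot_iff_le_centralizer, closure_le]
  rintro _ ⟨s, hs, rfl⟩ _ ⟨k, hk, rfl⟩
  refine (commutatorElement_eq_one_iff_mul_comm.1 ?_).symm
  rw [← map_commutatorElement, QuotientGroup.mk'_apply, QuotientGroup.eq_one_iff]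
  exact h s hs k hk

theorem relIndex_centralizer_lt_card {S : Set G} (hS : S.Finite) {T : Subgroup G}
    (hT : T ≤ normalizer S) (h1 : 1 ∈ S) {s : G} (hs : s ∈ S) (hs1 : s ≠ 1) :
    (centralizer {s}).relIndex T < Nat.card S := by
  rw [relIndex_centralizer_eq_card_range_conj, Nat.card_coe_set_eq, Nat.card_coe_set_eq]
  refine Set.ncard_lt_ncard ((Set.ssubset_iff_of_subset ?_).2 ⟨1, h1, ?_⟩) hS
  · rintro _ ⟨t, rfl⟩
    exact (hT t.2 s).1 hs
  · rintro ⟨t, ht⟩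
    exact hs1 (by simpa using ht)

end Subgroup

open Subgroup

section ClassCard

variable {G : Type*} [Group G]

theorem classCard_eq_index_centralizer (x : G) : classCard x = (centralizer {x}).index := by
  have h : conjugatesOf x = Set.range fun g => g * x * g⁻¹ := by
    ext y
    simp only [Set.mem_range, conjugatesOf, Set.mem_ofPred_eq, isConj_iff]
  rw [classCard, h, index_eq_card_range_of_fibers _ _ fun _ _ => conj_eq_conj_iff_mem_centralizer]

theorem classCard_eq_one_iff {x : G} : classCard x = 1 ↔ x ∈ center G := by
  rw [classCard_eq_index_centralizer, index_eq_one, centralizer_eq_top_iff_subset,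
    Set.singleton_subset_iff, SetLike.mem_coe]

theorem IsSmall.classCard_eq_one [Finite G] {x y : G} (hx : IsSmall x)
    (hlt : classCard y < classCard x) : classCard y = 1 := by
  have hy : classCard y ≠ 0 := by
    rw [classCard_eq_index_centralizer]
    exact index_ne_zero_of_finite
  have h1 : classCard (1 : G) = 1 := classCard_eq_one_iff.2 (one_mem _)
  exact hx ⟨⟨y, rfl⟩, hlt⟩ ⟨⟨1, h1⟩, by omega⟩

end ClassCard

section CommSet

variable {G : Type*} [Group G] {x : G} {K : Subgroup G}

theorem one_mem_commSet : (1 : G) ∈ commSet x K := ⟨1, one_mem K, by group⟩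

theorem card_commSet : Nat.card (commSet x K) = (centralizer {x}).relIndex K := by
  have h : commSet x K = (x⁻¹ * ·) '' Set.range fun k : K => (k : G) * x * (k : G)⁻¹ := by
    ext y
    constructor
    · rintro ⟨k, hk, rfl⟩
      exact ⟨_, ⟨⟨k⁻¹, inv_mem hk⟩, rfl⟩, by simp [mul_assoc]⟩
    · rintro ⟨_, ⟨k, rfl⟩, rfl⟩
      exact ⟨(k : G)⁻¹, inv_mem k.2, by simp [mul_assoc]⟩
  rw [h, Nat.card_image_of_injective (mul_right_injective x⁻¹),
    relIndex_centralizer_eq_card_range_conj]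

theorem conj_mem_commSet (hK : K.Normal) {c : G} (hc : c ∈ centralizer {x}) {y : G}
    (hy : y ∈ commSet x K) : c * y * c⁻¹ ∈ commSet x K := by
  obtain ⟨k, hk, rfl⟩ := hy
  refine ⟨c * k * c⁻¹, hK.conj_mem k hk c, ?_⟩
  have hcx : c * x * c⁻¹ = x := by rw [mem_centralizer_singleton_iff.1 hc]; group
  conv_rhs => rw [← hcx]
  group

theorem centralizer_le_normalizer_commSet (hK : K.Normal) :
    centralizer {x} ≤ normalizer (commSet x K) := fun _ hc y =>
  ⟨conj_mem_commSet hK hc, fun h => by simpa [mul_assoc] using conj_mem_commSet hK (inv_mem hc) h⟩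

theorem IsNormalSubsetOf.le_normalizer {S : Set G} (h : IsNormalSubsetOf S K) :
    K ≤ normalizer S := by
  intro k hk
  rw [mem_set_normalizer_iff'']
  intro y
  constructor
  · intro hy
    rw [← h k hk]
    exact ⟨y, hy, rfl⟩
  · intro hy
    rw [← h k⁻¹ (inv_mem hk)]
    exact ⟨_, hy, by group⟩

end CommSet

theorem IsSmall.commSet_subset_center {G : Type*} [Group G] [Finite G] {x : G} (hx : IsSmall x)
    {K : Subgroup G} (hK : K.Normal) (hns : IsNormalSubsetOf (commSet x K) K) :
    commSet x K ⊆ center G := by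
  intro s hs
  by_cases hs1 : s = 1
  · exact hs1 ▸ one_mem _
  rw [SetLike.mem_coe, ← classCard_eq_one_iff]
  refine hx.classCard_eq_one ?_
  set T := centralizer {x} ⊔ K
  have hT : T ≤ normalizer (commSet x K) :=
    sup_le (centralizer_le_normalizer_commSet hK) hns.le_normalizer
  have horbit := relIndex_centralizer_lt_card (Set.toFinite _) hT one_mem_commSet hs hs1
  rw [classCard_eq_index_centralizer, classCard_eq_index_centralizer]
  calc (centralizer {s}).index ≤ (centralizer {s}).relIndex T * T.index :=
        index_le_relIndex_mul_index _ _
    _ < Nat.card (commSet x K) * T.index :=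
        Nat.mul_lt_mul_of_pos_right horbit (Nat.pos_of_ne_zero index_ne_zero_of_finite)
    _ = (centralizer {x}).relIndex K * T.index := by rw [card_commSet]
    _ ≤ (centralizer {x}).relIndex T * T.index :=
        Nat.mul_le_mul_right _ (relIndex_le_of_le_right le_sup_right
          (isFiniteRelIndex_iff_relIndex_ne_zero.1 isFiniteRelIndex_of_finiteIndex))
    _ = (centralizer {x}).index := relIndex_mul_index le_sup_left

/-- Let `K` be a normal subgroup of a finite group `G` such that `[x, K]` is a normal
subset of `K` for every small element `x` of `G`. Then `[M(G), K] ≤ Z(G)`. -/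
theorem stmt_7 {G : Type*} [Group G] [Finite G] (K : Subgroup G) (hK : K.Normal)
    (hns : ∀ x : G, IsSmall x → IsNormalSubsetOf (commSet x (K : Set G)) (K : Set G)) :
    ⁅smallGen G, K⁆ ≤ Subgroup.center G := by
  refine commutator_closure_le fun x hx k hk => ?_
  have hs : x⁻¹ * k * x * k⁻¹ ∈ commSet x K := ⟨k⁻¹, inv_mem hk, by group⟩
  have hz := hx.commSet_subset_center hK (hns x hx) hs
  have hcomm : ⁅x, k⁆ = (x * (x⁻¹ * k * x * k⁻¹) * x⁻¹)⁻¹ := by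
    rw [commutatorElement_def]
    group
  rw [hcomm]
  exact inv_mem (Normal.conj_mem inferInstance _ hz x)
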